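/- arXiv:2007.09959 — 3 statements merged into one kernel-verified Lean document; each statement's English description precedes it below -/
import Mathlib

section
/- Let G be a finite simple graph and let v be a non-free vertex of G, i.e., the neighborhood N_G(v) does not induce a complete subgraph. Let G_v denote the graph on V(G) with edge set E(G) ∪ {{u,w} : u, w ∈ N_G(v), u ≠ w}. Then η(G_v) < η(G). -/
open SimpleGraph

variable {V : Type*}

/-- `H` is a clique disjoint edge set of `G`: a set of edges of `G` such that
no two distinct edges of `H` are contained in a common clique of `G`. -/
def CliqueDisjoint (G : SimpleGraph V) (H : Set (Sym2 V)) : Prop :=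
  H ⊆ G.edgeSet ∧ ∀ e ∈ H, ∀ f ∈ H, e ≠ f →
    ¬ ∃ K : Set V, G.IsClique K ∧ (∀ v ∈ e, v ∈ K) ∧ (∀ v ∈ f, v ∈ K)

/-- `eta G` is the maximum size of a clique disjoint edge set in `G`. -/
noncomputable def eta (G : SimpleGraph V) : ℕ :=
  sSup {n | ∃ H : Finset (Sym2 V), CliqueDisjoint G ↑H ∧ H.card = n}

/-- `Gv G v` is the graph obtained from `G` by adding all edges between neighbors of `v`. -/
def Gv (G : SimpleGraph V) (v : V) : SimpleGraph V :=
  G ⊔ SimpleGraph.fromRel (fun u w => G.Adj v u ∧ G.Adj v w)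

/-!
Let `S` be a maximum clique disjoint edge set of `G_v`. The closed neighbourhood `N[v]` is a
clique of `G_v`, so at most one edge of `S` lies inside it; the remaining edges avoid the new
edges of `G_v`, hence form a clique disjoint edge set `S'` of `G`. Every clique of `G` through `v`
lies in `N[v]`, so for non-adjacent neighbours `u, w` of `v` the edges `vu` and `vw` can be added
to `S'`, giving a clique disjoint edge set of `G` of size `|S| + 1`.
-/

namespace SimpleGraph

variable {G : SimpleGraph V}

def closedNeighborSet (G : SimpleGraph V) (v : V) : Set V := insert v (G.neighborSet v)

def SharesClique (G : SimpleGraph V) (e f : Sym2 V) : Prop :=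
  ∃ K : Set V, G.IsClique K ∧ (∀ x ∈ e, x ∈ K) ∧ (∀ x ∈ f, x ∈ K)

lemma SharesClique.symm {e f : Sym2 V} (h : G.SharesClique e f) : G.SharesClique f e :=
  let ⟨K, hK, he, hf⟩ := h; ⟨K, hK, hf, he⟩

lemma sharesClique_self {e : Sym2 V} (he : e ∈ G.edgeSet) : G.SharesClique e e := by
  induction e using Sym2.ind with
  | _ a b =>
    exact ⟨{a, b}, isClique_pair.2 fun _ => he, by simp, by simp⟩

lemma not_sharesClique_of_not_adj {a b u w : V} (huw : u ≠ w) (hnadj : ¬ G.Adj u w) :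
    ¬ G.SharesClique s(a, u) s(b, w) :=
  fun ⟨_, hK, hu, hw⟩ => hnadj (hK (hu u (Sym2.mem_mk_right a u)) (hw w (Sym2.mem_mk_right b w)) huw)

lemma IsClique.subset_closedNeighborSet {K : Set V} (hK : G.IsClique K) {v : V} (hv : v ∈ K) :
    K ⊆ G.closedNeighborSet v := by
  intro x hx
  rcases eq_or_ne x v with rfl | hxv
  · exact Set.mem_insert _ _
  · exact Set.mem_insert_of_mem _ (hK hv hx hxv.symm)

lemma not_sharesClique_of_not_subset_closedNeighborSet {v u : V} {f : Sym2 V}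
    (hf : ¬ ∀ x ∈ f, x ∈ G.closedNeighborSet v) : ¬ G.SharesClique s(v, u) f :=
  fun ⟨_, hK, hvu, hfK⟩ =>
    hf fun x hx => hK.subset_closedNeighborSet (hvu v (Sym2.mem_mk_left v u)) (hfK x hx)

end SimpleGraph

namespace CliqueDisjoint

variable {G G' : SimpleGraph V}

lemma subset {H H' : Set (Sym2 V)} (hH : CliqueDisjoint G H) (h : H' ⊆ H) :
    CliqueDisjoint G H' :=
  ⟨h.trans hH.1, fun e he f hf => hH.2 e (h he) f (h hf)⟩

lemma of_le {H : Set (Sym2 V)} (hH : CliqueDisjoint G' H) (hle : G ≤ G')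
    (hE : H ⊆ G.edgeSet) : CliqueDisjoint G H :=
  ⟨hE, fun e he f hf hef ⟨K, hK, heK, hfK⟩ => hH.2 e he f hf hef ⟨K, hK.mono hle, heK, hfK⟩⟩

lemma insert {H : Set (Sym2 V)} {e : Sym2 V} (hH : CliqueDisjoint G H) (he : e ∈ G.edgeSet)
    (hsep : ∀ f ∈ H, ¬ G.SharesClique e f) : CliqueDisjoint G (insert e H) := by
  refine ⟨Set.insert_subset he hH.1, ?_⟩
  rintro f (rfl | hf) g (rfl | hg) hfg
  · exact absurd rfl hfg
  · exact hsep g hg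
  · exact fun h => hsep f hf (SharesClique.symm h)
  · exact hH.2 f hf g hg hfg

lemma exists_subset_card_le_add_one {H : Finset (Sym2 V)} (hH : CliqueDisjoint G H) {K : Set V}
    (hK : G.IsClique K) :
    ∃ H' ⊆ H, (∀ e ∈ H', ¬ ∀ x ∈ e, x ∈ K) ∧ H.card ≤ H'.card + 1 := by
  classical
  refine ⟨H.filter fun e => ¬ ∀ x ∈ e, x ∈ K, Finset.filter_subset _ _,
    fun e he => (Finset.mem_filter.1 he).2, ?_⟩
  have hin : (H.filter fun e => ∀ x ∈ e, x ∈ K).card ≤ 1 := by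
    rw [Finset.card_le_one]
    intro e he f hf
    rw [Finset.mem_filter] at he hf
    by_contra hef
    exact hH.2 e he.1 f hf.1 hef ⟨K, hK, he.2, hf.2⟩
  have := Finset.card_filter_add_card_filter_not (s := H) fun e => ∀ x ∈ e, x ∈ K
  omega

lemma bddAbove_card [Finite V] (G : SimpleGraph V) :
    BddAbove {n | ∃ H : Finset (Sym2 V), CliqueDisjoint G H ∧ H.card = n} := by
  have := Fintype.ofFinite V
  refine ⟨Fintype.card (Sym2 V), ?_⟩
  rintro _ ⟨H, -, rfl⟩
  exact Finset.card_le_univ H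

lemma card_le_eta [Finite V] {H : Finset (Sym2 V)} (hH : CliqueDisjoint G H) :
    H.card ≤ eta G :=
  le_csSup (bddAbove_card G) ⟨H, hH, rfl⟩

end CliqueDisjoint

lemma exists_cliqueDisjoint_card_eq_eta [Finite V] (G : SimpleGraph V) :
    ∃ H : Finset (Sym2 V), CliqueDisjoint G H ∧ H.card = eta G :=
  Nat.sSup_mem (s := {n | ∃ H : Finset (Sym2 V), CliqueDisjoint G H ∧ H.card = n})
    ⟨0, ∅, ⟨by simp, by simp⟩, rfl⟩ (CliqueDisjoint.bddAbove_card G)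

section Gv

variable {G : SimpleGraph V} {v : V}

lemma le_Gv : G ≤ Gv G v := le_sup_left

lemma isClique_Gv_closedNeighborSet : (Gv G v).IsClique (G.closedNeighborSet v) := by
  rintro x (rfl | hx) y (rfl | hy) hxy
  · exact absurd rfl hxy
  · exact Or.inl hy
  · exact Or.inl (G.adj_symm hx)
  · exact Or.inr ⟨hxy, Or.inl ⟨hx, hy⟩⟩

lemma mem_edgeSet_of_mem_edgeSet_Gv {e : Sym2 V} (he : e ∈ (Gv G v).edgeSet)
    (hout : ¬ ∀ x ∈ e, x ∈ G.closedNeighborSet v) : e ∈ G.edgeSet := by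
  induction e using Sym2.ind with
  | _ a b =>
    simp only [mem_edgeSet, Gv, sup_adj, fromRel_adj] at he
    rcases he with h | ⟨-, ⟨ha, hb⟩ | ⟨hb, ha⟩⟩
    · exact h
    all_goals
      refine absurd ?_ hout
      intro x hx
      rcases Sym2.mem_iff.1 hx with rfl | rfl
      exacts [Set.mem_insert_of_mem _ ‹_›, Set.mem_insert_of_mem _ ‹_›]

end Gv

/-- If `v` is a non-free vertex of `G` then `η(G_v) < η(G)`. -/
theorem eta_Gv_lt [Fintype V] (G : SimpleGraph V) (v : V)
    (hv : ¬ G.IsClique (G.neighborSet v)) :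
    eta (Gv G v) < eta G := by
  classical
  obtain ⟨u, hu, w, hw, huw, hnadj⟩ : ∃ u, G.Adj v u ∧ ∃ w, G.Adj v w ∧ u ≠ w ∧ ¬ G.Adj u w := by
    simpa [isClique_iff, Set.Pairwise] using hv
  obtain ⟨S, hS, hScard⟩ := exists_cliqueDisjoint_card_eq_eta (Gv G v)
  obtain ⟨S', hS'S, hS'out, hcard⟩ := hS.exists_subset_card_le_add_one isClique_Gv_closedNeighborSet
  have hS' : CliqueDisjoint G S' :=
    (hS.subset (Finset.coe_subset.2 hS'S)).of_le le_Gv fun e he =>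
      mem_edgeSet_of_mem_edgeSet_Gv (hS.1 (hS'S he)) (hS'out e he)
  have hsep (a : V) : ∀ f ∈ S', ¬ G.SharesClique s(v, a) f := fun f hf =>
    not_sharesClique_of_not_subset_closedNeighborSet (hS'out f hf)
  have hw' : s(v, w) ∉ S' := fun h => hsep w _ h (sharesClique_self hw)
  have hu' : s(v, u) ∉ insert s(v, w) S' := fun h => by
    rcases Finset.mem_insert.1 h with h | h
    · exact huw (Sym2.congr_right.1 h)
    · exact hsep u _ h (sharesClique_self hu)
  have hT : CliqueDisjoint G ↑(insert s(v, u) (insert s(v, w) S')) := by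
    simp only [Finset.coe_insert]
    refine (hS'.insert hw (hsep w)).insert hu ?_
    rintro f (rfl | hf)
    exacts [not_sharesClique_of_not_adj huw hnadj, hsep u f hf]
  have hTcard := hT.card_le_eta
  rw [Finset.card_insert_of_notMem hu', Finset.card_insert_of_notMem hw'] at hTcard
  omega
end

section
/- Let G be a finite simple graph and v a vertex of G. Let H be a clique disjoint edge set of G_v with v ∉ e for all e ∈ H. If some edge e = {u,w} ∈ H satisfies {u,w} ∉ E(G), then u and w are both neighbors of v in G, and the set (H ∖ {e}) ∪ {{v,u}, {v,w}} is a clique disjoint edge set of G of cardinality |H| + 1. -/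
open SimpleGraph

variable {V : Type*}

lemma gv_adj {G : SimpleGraph V} {v a b : V} :
    (Gv G v).Adj a b ↔ G.Adj a b ∨ (a ≠ b ∧ G.Adj v a ∧ G.Adj v b) := by
  simp only [Gv, sup_adj, fromRel_adj]
  tauto

lemma clique_union2 {G : SimpleGraph V} {v u w : V} {K : Set V}
    (hK : G.IsClique K) (hv : v ∈ K) (hu : G.Adj v u) (hw : G.Adj v w) :
    (Gv G v).IsClique (K ∪ {u, w}) := by
  have hn : ∀ x ∈ K ∪ ({u, w} : Set V), x ≠ v → G.Adj v x := by
    rintro x (hx | hx) hxv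
    · exact hK hv hx (Ne.symm hxv)
    · rcases hx with rfl | rfl
      · exact hu
      · exact hw
  intro a ha b hb hab
  by_cases hav : a = v
  · subst hav
    exact gv_adj.2 (Or.inl (hn b hb (Ne.symm hab)))
  by_cases hbv : b = v
  · subst hbv
    exact (gv_adj.2 (Or.inl (hn a ha hav))).symm
  · exact gv_adj.2 (Or.inr ⟨hab, hn a ha hav, hn b hb hbv⟩)

/-- If `H` is a clique disjoint edge set of `G_v` avoiding `v` and containing an
edge `{u,w}` not in `E(G)`, then `u, w ∈ N_G(v)` and replacing `{u,w}` by
`{v,u}, {v,w}` yields a clique disjoint edge set of `G` of size `|H| + 1`. -/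
theorem swap_nonedge [Fintype V] [DecidableEq V] (G : SimpleGraph V) (v : V)
    (H : Finset (Sym2 V)) (hH : CliqueDisjoint (Gv G v) ↑H)
    (hvH : ∀ e ∈ H, v ∉ e) (u w : V) (he : s(u, w) ∈ H) (hne : ¬ G.Adj u w) :
    G.Adj v u ∧ G.Adj v w ∧
    CliqueDisjoint G ↑(insert s(v, u) (insert s(v, w) (H.erase s(u, w)))) ∧
    (insert s(v, u) (insert s(v, w) (H.erase s(u, w)))).card = H.card + 1 := by
  classical
  obtain ⟨hHe, hHd⟩ := hH
  have huw0 : (Gv G v).Adj u w := (Gv G v).mem_edgeSet.1 (hHe (Finset.mem_coe.2 he))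
  obtain ⟨hneq, hvu, hvw⟩ : u ≠ w ∧ G.Adj v u ∧ G.Adj v w :=
    (gv_adj.1 huw0).resolve_left hne
  refine ⟨hvu, hvw, ⟨?_, ?_⟩, ?_⟩
  · -- subset of edgeSet
    intro f hf
    simp only [Finset.coe_insert, Set.mem_insert_iff, Finset.mem_coe,
      Finset.mem_erase] at hf
    rcases hf with rfl | rfl | ⟨hfne, hf⟩
    · exact G.mem_edgeSet.2 hvu
    · exact G.mem_edgeSet.2 hvw
    · -- old edge must be a G-edge
      induction f with
      | _ a b =>
        by_contra hab
        have hadj : (Gv G v).Adj a b := (Gv G v).mem_edgeSet.1 (hHe (Finset.mem_coe.2 hf))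
        obtain ⟨hab', hva, hvb⟩ := (gv_adj.1 hadj).resolve_left
          (fun h => hab (G.mem_edgeSet.2 h))
        refine hHd s(a, b) (Finset.mem_coe.2 hf) s(u, w) (Finset.mem_coe.2 he) hfne
          ⟨{u, w, a, b}, ?_, ?_, ?_⟩
        · intro x hx y hy hxy
          have hx' : G.Adj v x := by rcases hx with rfl | rfl | rfl | rfl <;> assumption
          have hy' : G.Adj v y := by rcases hy with rfl | rfl | rfl | rfl <;> assumption
          exact gv_adj.2 (Or.inr ⟨hxy, hx', hy'⟩)
        · intro x hx
          rcases Sym2.mem_iff.1 hx with rfl | rfl <;> simp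
        · intro x hx
          rcases Sym2.mem_iff.1 hx with rfl | rfl <;> simp
  · -- pairwise clique disjointness
    have key : ∀ f ∈ H, f ≠ s(u, w) → ∀ K : Set V, G.IsClique K → v ∈ K →
        (∀ y ∈ f, y ∈ K) → False := by
      intro f hf hfne K hK hvK hfK
      refine hHd s(u, w) (Finset.mem_coe.2 he) f (Finset.mem_coe.2 hf) (Ne.symm hfne)
        ⟨K ∪ {u, w}, clique_union2 hK hvK hvu hvw, ?_, ?_⟩
      · intro x hx
        rcases Sym2.mem_iff.1 hx with rfl | rfl <;> simp
      · intro x hx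
        exact Set.mem_union_left _ (hfK x hx)
    intro e1 h1 e2 h2 h12 ⟨K, hK, hK1, hK2⟩
    simp only [Finset.coe_insert, Set.mem_insert_iff, Finset.mem_coe,
      Finset.mem_erase] at h1 h2
    have hvne_u : v ≠ u := hvu.ne
    have hvne_w : v ≠ w := hvw.ne
    rcases h1 with rfl | rfl | ⟨h1ne, h1⟩ <;> rcases h2 with rfl | rfl | ⟨h2ne, h2⟩
    · exact h12 rfl
    · -- s(v,u) and s(v,w)
      have hu : u ∈ K := hK1 u (Sym2.mem_mk_right v u)
      have hw : w ∈ K := hK2 w (Sym2.mem_mk_right v w)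
      exact hne (hK hu hw hneq)
    · exact key e2 h2 h2ne K hK (hK1 v (Sym2.mem_mk_left v u)) hK2
    · have hu : u ∈ K := hK2 u (Sym2.mem_mk_right v u)
      have hw : w ∈ K := hK1 w (Sym2.mem_mk_right v w)
      exact hne (hK hu hw hneq)
    · exact h12 rfl
    · exact key e2 h2 h2ne K hK (hK1 v (Sym2.mem_mk_left v w)) hK2
    · exact key e1 h1 h1ne K hK (hK2 v (Sym2.mem_mk_left v u)) hK1
    · exact key e1 h1 h1ne K hK (hK2 v (Sym2.mem_mk_left v w)) hK1
    · -- two old edges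
      exact hHd e1 (Finset.mem_coe.2 h1) e2 (Finset.mem_coe.2 h2) h12
        ⟨K, hK.mono le_sup_left, hK1, hK2⟩
  · -- cardinality
    have hvne_w : v ≠ w := hvw.ne
    have hvne_u : v ≠ u := hvu.ne
    have h1 : s(v, w) ∉ H.erase s(u, w) := fun h =>
      hvH _ (Finset.mem_of_mem_erase h) (Sym2.mem_mk_left v w)
    have h2 : s(v, u) ∉ insert s(v, w) (H.erase s(u, w)) := by
      intro h
      rcases Finset.mem_insert.1 h with h | h
      · rw [Sym2.eq_iff] at h
        rcases h with ⟨-, h⟩ | ⟨h, -⟩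
        · exact hneq h
        · exact hvne_w h
      · exact hvH _ (Finset.mem_of_mem_erase h) (Sym2.mem_mk_left v u)
    rw [Finset.card_insert_of_notMem h2, Finset.card_insert_of_notMem h1,
      Finset.card_erase_of_mem he]
    have : 0 < H.card := Finset.card_pos.2 ⟨_, he⟩
    omega
end

section
/- Let G be a finite simple graph, v a non-free vertex, and α, β ∈ N_G(v) with {α,β} ∉ E(G). Suppose H ⊆ E(G) is a clique disjoint edge set of G_v with v not in any edge of H. If there exist e, f ∈ H and cliques K, K' of G with e ∪ {v,α} ⊆ K and f ∪ {v,β} ⊆ K', then e = f. -/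
open SimpleGraph

variable {V : Type*}

/-- If two edges `e, f` of a clique disjoint edge set of `G_v` (all of whose edges
are edges of `G` avoiding `v`) lie in cliques of `G` together with `{v,α}` and
`{v,β}` respectively, then `e = f`. -/
theorem edges_in_cliques_with_v_eq (G : SimpleGraph V) (v α β : V)
    (hv : ¬ G.IsClique (G.neighborSet v))
    (hα : G.Adj v α) (hβ : G.Adj v β) (hαβ : ¬ G.Adj α β)
    (H : Set (Sym2 V)) (hHE : H ⊆ G.edgeSet)
    (hH : CliqueDisjoint (Gv G v) H) (hvH : ∀ e ∈ H, v ∉ e)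
    (e f : Sym2 V) (he : e ∈ H) (hf : f ∈ H)
    (K K' : Set V) (hK : G.IsClique K) (hK' : G.IsClique K')
    (heK : ∀ x ∈ e, x ∈ K) (hvK : v ∈ K) (hαK : α ∈ K)
    (hfK' : ∀ x ∈ f, x ∈ K') (hvK' : v ∈ K') (hβK' : β ∈ K') :
    e = f := by
  by_contra hef
  -- every endpoint of e (resp. f) is a neighbor of v in G
  have hve : ∀ x ∈ e, G.Adj v x := by
    intro x hx
    exact hK hvK (heK x hx) (fun h => hvH e he (h ▸ hx))
  have hvf : ∀ x ∈ f, G.Adj v x := by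
    intro x hx
    exact hK' hvK' (hfK' x hx) (fun h => hvH f hf (h ▸ hx))
  apply hH.2 e he f hf hef
  refine ⟨{x | x ∈ e ∨ x ∈ f ∨ x = v}, ?_, fun x hx => Or.inl hx,
    fun x hx => Or.inr (Or.inl hx)⟩
  intro x hx y hy hxy
  have adjv : ∀ z, (z ∈ e ∨ z ∈ f) → (Gv G v).Adj v z := by
    intro z hz
    exact Or.inl (hz.elim (hve z) (hvf z))
  rcases hx with hx | hx | hx
  · rcases hy with hy | hy | hy
    · exact Or.inr ⟨hxy, Or.inl ⟨hve x hx, hve y hy⟩⟩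
    · exact Or.inr ⟨hxy, Or.inl ⟨hve x hx, hvf y hy⟩⟩
    · exact hy ▸ ((adjv x (Or.inl hx)).symm)
  · rcases hy with hy | hy | hy
    · exact Or.inr ⟨hxy, Or.inl ⟨hvf x hx, hve y hy⟩⟩
    · exact Or.inr ⟨hxy, Or.inl ⟨hvf x hx, hvf y hy⟩⟩
    · exact hy ▸ ((adjv x (Or.inr hx)).symm)
  · rcases hy with hy | hy | hy
    · exact hx ▸ (adjv y (Or.inl hy))
    · exact hx ▸ (adjv y (Or.inr hy))
    · exact absurd (hx.trans hy.symm) hxy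
end
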